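/- arXiv:1511.09382 — 4 statements merged into one kernel-verified Lean document; each statement's English description precedes it below -/
import Mathlib

section
/- Let Φ: ℝ^D → ℝ be differentiable with Φ ≥ 0, and suppose there exist a > 0 and b ∈ (0,1) such that (1/2)⟨∇Φ(q), q⟩ ≥ b·Φ(q) + ((c₁b)² + c₂b(1−b))/(2(1−b))·|q|² − a for all q, where c₁, c₂ > 0. Then for V(q,p) = |p|²/2 + Φ(q) + c₁⟨q,p⟩ + c₂|q|²/2 one has b·V(q,p) ≤ |p|²/2 + (1/2)⟨∇Φ(q), q⟩ + a for all (q,p) ∈ ℝ^{2D}. -/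
/-! Young's inequality with weight `1 - b` absorbs the cross term `c₁ b ⟨q, p⟩` of `b V` into
`(1 - b)|p|²/2 + (c₁ b)²/(2(1 - b)) |q|²`; the drift hypothesis pays for exactly this multiple
of `|q|²` together with `b Φ(q) + c₂ b |q|²/2`. -/

theorem mul_le_young (c x y : ℝ) {δ : ℝ} (hδ : 0 < δ) :
    c * (x * y) ≤ δ / 2 * y ^ 2 + c ^ 2 / (2 * δ) * x ^ 2 := by
  rw [div_mul_eq_mul_div, div_mul_eq_mul_div, div_add_div _ _ two_ne_zero (by positivity),
    le_div_iff₀ (by positivity)]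
  nlinarith [sq_nonneg (δ * y - c * x)]

theorem mul_sum_mul_le_young {ι : Type*} (s : Finset ι) (x y : ι → ℝ) (c : ℝ) {δ : ℝ}
    (hδ : 0 < δ) :
    c * ∑ i ∈ s, x i * y i
      ≤ δ / 2 * ∑ i ∈ s, y i ^ 2 + c ^ 2 / (2 * δ) * ∑ i ∈ s, x i ^ 2 := by
  simp only [Finset.mul_sum, ← Finset.sum_add_distrib]
  exact Finset.sum_le_sum fun i _ => mul_le_young c (x i) (y i) hδ

theorem lyapunov_drift_bound_general (D : ℕ) (Φ : (Fin D → ℝ) → ℝ)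
    (gradPhi : (Fin D → ℝ) → (Fin D → ℝ))
    (a b c₁ c₂ : ℝ) (hb1 : b < 1)
    (hdrift : ∀ q : Fin D → ℝ,
      (1 / 2) * ∑ i, gradPhi q i * q i
        ≥ b * Φ q + ((c₁ * b) ^ 2 + c₂ * b * (1 - b)) / (2 * (1 - b)) * (∑ i, (q i) ^ 2) - a) :
    ∀ q p : Fin D → ℝ,
      b * ((∑ i, (p i) ^ 2) / 2 + Φ q + c₁ * (∑ i, q i * p i) + c₂ * (∑ i, (q i) ^ 2) / 2)
        ≤ (∑ i, (p i) ^ 2) / 2 + (1 / 2) * (∑ i, gradPhi q i * q i) + a := by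
  intro q p
  have hδ : 0 < 1 - b := sub_pos.2 hb1
  have young := mul_sum_mul_le_young Finset.univ q p (c₁ * b) hδ
  have drift := hdrift q
  have split : ((c₁ * b) ^ 2 + c₂ * b * (1 - b)) / (2 * (1 - b))
      = (c₁ * b) ^ 2 / (2 * (1 - b)) + c₂ * b / 2 := by
    field_simp
  rw [split] at drift
  linear_combination young + drift

/-- Under the drift hypothesis on `⟨∇Φ(q), q⟩`, the Lyapunov function
`V(q,p) = |p|²/2 + Φ(q) + c₁⟨q,p⟩ + c₂|q|²/2` satisfies
`b V(q,p) ≤ |p|²/2 + ⟨∇Φ(q), q⟩/2 + a`. -/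
theorem lyapunov_drift_bound (D : ℕ) (Φ : (Fin D → ℝ) → ℝ)
    (gradPhi : (Fin D → ℝ) → (Fin D → ℝ))
    (hΦ : Differentiable ℝ Φ)
    (hgrad : ∀ q v, fderiv ℝ Φ q v = ∑ i, gradPhi q i * v i)
    (hΦ0 : ∀ q, 0 ≤ Φ q)
    (a b c₁ c₂ : ℝ) (ha : 0 < a) (hb0 : 0 < b) (hb1 : b < 1)
    (hc₁ : 0 < c₁) (hc₂ : 0 < c₂)
    (hdrift : ∀ q : Fin D → ℝ,
      (1 / 2) * ∑ i, gradPhi q i * q i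
        ≥ b * Φ q + ((c₁ * b) ^ 2 + c₂ * b * (1 - b)) / (2 * (1 - b)) * (∑ i, (q i) ^ 2) - a) :
    ∀ q p : Fin D → ℝ,
      b * ((∑ i, (p i) ^ 2) / 2 + Φ q + c₁ * (∑ i, q i * p i) + c₂ * (∑ i, (q i) ^ 2) / 2)
        ≤ (∑ i, (p i) ^ 2) / 2 + (1 / 2) * (∑ i, gradPhi q i * q i) + a :=
  lyapunov_drift_bound_general D Φ gradPhi a b c₁ c₂ hb1 hdrift
end

section
/- Under the hypotheses of the previous two statements (Φ ≥ 0 differentiable, the drift inequality on ⟨∇Φ(q), q⟩ with constants a > 0, b ∈ (0,1), and c₁, c₂ defined from λ > 0, φ ∈ (0, π/2] as above), there exist γ > 0 and K > 0 such that LV(q,p) ≤ −γ·V(q,p) + K for all (q,p) ∈ ℝ^{2D}; one may take γ = 2c₁b and K = 2c₁a + (D/(2λ))·sin²(φ). -/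
open MeasureTheory ProbabilityTheory Real

/-- Standard Gaussian measure on `ℝ^D`. -/
noncomputable def stdGaussian (D : ℕ) : Measure (Fin D → ℝ) :=
  Measure.pi fun _ => gaussianReal 0 1

/-- The RHMC infinitesimal generator. -/
noncomputable def rhmcGen (D : ℕ) (lam φ : ℝ) (gradPhi : (Fin D → ℝ) → (Fin D → ℝ))
    (f : (Fin D → ℝ) × (Fin D → ℝ) → ℝ) (z : (Fin D → ℝ) × (Fin D → ℝ)) : ℝ :=
  lam⁻¹ * ((∫ ξ : Fin D → ℝ,
      f (z.1, fun i => Real.cos φ * z.2 i + Real.sin φ * ξ i) ∂stdGaussian D) - f z)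
    + fderiv ℝ f z (z.2, fun i => -gradPhi z.1 i)

/-- The RHMC Lyapunov function. -/
noncomputable def lyapV (D : ℕ) (Φ : (Fin D → ℝ) → ℝ) (c₁ c₂ : ℝ)
    (z : (Fin D → ℝ) × (Fin D → ℝ)) : ℝ :=
  (∑ i, (z.2 i) ^ 2) / 2 + Φ z.1 + c₁ * (∑ i, z.1 i * z.2 i) + c₂ * (∑ i, (z.1 i) ^ 2) / 2

/-! Averaging over the Gaussian refreshment gives
`E V(q, cos φ p + sin φ ξ) = V(q, cos φ p) + D sin²φ / 2`, so `L V` is explicit. The values of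
`c₁` and `c₂` make the `⟨q, p⟩` terms of the refreshment and of the Hamiltonian flow cancel, leaving
`L V = -c₁ (|p|² + ⟨∇Φ(q), q⟩) + D sin²φ / (2λ)`. Young's inequality
`2 c₁ b ⟨q, p⟩ ≤ (1 - b) |p|² + (c₁ b)² / (1 - b) |q|²` together with the drift hypothesis then gives
`2 b V ≤ |p|² + ⟨∇Φ(q), q⟩ + 2 a`, which is the claim after multiplying by `c₁ > 0`. -/

instance isProbabilityMeasure_stdGaussian (D : ℕ) : IsProbabilityMeasure (stdGaussian D) := by
  unfold _root_.stdGaussian; infer_instance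

section GaussianMoments

variable {D : ℕ} (i : Fin D)

lemma integrable_stdGaussian_apply : Integrable (fun ξ : Fin D → ℝ => ξ i) (stdGaussian D) :=
  integrable_eval ((memLp_id_gaussianReal 1).integrable le_rfl)

lemma integrable_stdGaussian_apply_sq :
    Integrable (fun ξ : Fin D → ℝ => ξ i ^ 2) (stdGaussian D) :=
  integrable_comp_eval (μ := fun _ => gaussianReal 0 1) (i := i) (f := fun x => x ^ 2)
    (memLp_id_gaussianReal 2).integrable_sq

lemma integral_stdGaussian_apply : ∫ ξ, ξ i ∂stdGaussian D = 0 := by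
  rw [_root_.stdGaussian, integral_eval, integral_id_gaussianReal]

lemma integral_stdGaussian_apply_sq : ∫ ξ, ξ i ^ 2 ∂stdGaussian D = 1 := by
  have h := variance_eq_sub (memLp_id_gaussianReal 2 : MemLp id 2 (gaussianReal 0 1))
  rw [variance_id_gaussianReal] at h
  rw [_root_.stdGaussian,
    integral_comp_eval (μ := fun _ => gaussianReal 0 1) (i := i) (f := fun x => x ^ 2) (by fun_prop)]
  simpa [integral_id_gaussianReal] using h.symm

end GaussianMoments

lemma lyapV_add_smul {D : ℕ} (Φ : (Fin D → ℝ) → ℝ) (c₁ c₂ : ℝ) (q x ξ : Fin D → ℝ) (s : ℝ) :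
    lyapV D Φ c₁ c₂ (q, fun i => x i + s * ξ i)
      = lyapV D Φ c₁ c₂ (q, x) + ∑ i, ((x i + c₁ * q i) * s * ξ i + s ^ 2 / 2 * ξ i ^ 2) := by
  have h := Finset.sum_congr rfl fun i (_ : i ∈ Finset.univ) =>
    show (x i + s * ξ i) ^ 2 / 2 + c₁ * (q i * (x i + s * ξ i))
      = x i ^ 2 / 2 + c₁ * (q i * x i) + ((x i + c₁ * q i) * s * ξ i + s ^ 2 / 2 * ξ i ^ 2) by ring
  simp only [lyapV, Finset.sum_add_distrib, ← Finset.sum_div, ← Finset.mul_sum] at h ⊢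
  linarith

lemma integral_lyapV_add_smul {D : ℕ} (Φ : (Fin D → ℝ) → ℝ) (c₁ c₂ : ℝ) (q x : Fin D → ℝ) (s : ℝ) :
    ∫ ξ, lyapV D Φ c₁ c₂ (q, fun i => x i + s * ξ i) ∂stdGaussian D
      = lyapV D Φ c₁ c₂ (q, x) + D * s ^ 2 / 2 := by
  have hint : ∀ i, Integrable (fun ξ : Fin D → ℝ => (x i + c₁ * q i) * s * ξ i) (stdGaussian D) :=
    fun i => (integrable_stdGaussian_apply i).const_mul _
  have hint_sq : ∀ i, Integrable (fun ξ : Fin D → ℝ => s ^ 2 / 2 * ξ i ^ 2) (stdGaussian D) :=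
    fun i => (integrable_stdGaussian_apply_sq i).const_mul _
  have hint_term : ∀ i ∈ Finset.univ, Integrable
      (fun ξ : Fin D → ℝ => (x i + c₁ * q i) * s * ξ i + s ^ 2 / 2 * ξ i ^ 2) (stdGaussian D) :=
    fun i _ => (hint i).add (hint_sq i)
  simp_rw [lyapV_add_smul]
  rw [integral_add (integrable_const _) (integrable_finsetSum _ hint_term),
    integral_finsetSum _ hint_term]
  simp_rw [integral_add (hint _) (hint_sq _), integral_const_mul, integral_stdGaussian_apply,
    integral_stdGaussian_apply_sq]
  simp only [integral_const, probReal_univ, smul_eq_mul, one_mul, mul_zero, mul_one, zero_add,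
    Finset.sum_const, Finset.card_univ, Fintype.card_fin, nsmul_eq_mul, add_right_inj]
  ring

lemma fderiv_lyapV {D : ℕ} {Φ : (Fin D → ℝ) → ℝ} (c₁ c₂ : ℝ) {z : (Fin D → ℝ) × (Fin D → ℝ)}
    (hΦ : DifferentiableAt ℝ Φ z.1) (v : (Fin D → ℝ) × (Fin D → ℝ)) :
    fderiv ℝ (lyapV D Φ c₁ c₂) z v
      = ∑ i, z.2 i * v.2 i + fderiv ℝ Φ z.1 v.1
        + c₁ * ∑ i, (z.1 i * v.2 i + z.2 i * v.1 i) + c₂ * ∑ i, z.1 i * v.1 i := by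
  have hq (i : Fin D) := (hasFDerivAt_apply (𝕜 := ℝ) i z.1).comp z (hasFDerivAt_fst (p := z))
  have hp (i : Fin D) := (hasFDerivAt_apply (𝕜 := ℝ) i z.2).comp z (hasFDerivAt_snd (p := z))
  have hV : lyapV D Φ c₁ c₂ = fun z => 2⁻¹ * ∑ i, z.2 i * z.2 i + Φ z.1
      + c₁ * ∑ i, z.1 i * z.2 i + c₂ / 2 * ∑ i, z.1 i * z.1 i := by
    funext z; simp only [lyapV, sq]; ring
  have hpp := HasFDerivAt.fun_sum (u := Finset.univ) fun i _ => (hp i).fun_mul (hp i)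
  have hqp := HasFDerivAt.fun_sum (u := Finset.univ) fun i _ => (hq i).fun_mul (hp i)
  have hqq := HasFDerivAt.fun_sum (u := Finset.univ) fun i _ => (hq i).fun_mul (hq i)
  have h := (((hpp.const_mul 2⁻¹).fun_add (hΦ.hasFDerivAt.comp z hasFDerivAt_fst)).fun_add
      (hqp.const_mul c₁)).fun_add (hqq.const_mul (c₂ / 2))
  rw [(h.congr_of_eventuallyEq (.of_forall fun w => congrFun hV w)).fderiv]
  simp only [Function.comp_apply, add_apply, smul_apply,
    sum_apply, ContinuousLinearMap.comp_apply, ContinuousLinearMap.coe_fst',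
    ContinuousLinearMap.coe_snd', ContinuousLinearMap.proj_apply, smul_eq_mul, Finset.mul_sum]
  ring_nf

lemma rhmcGen_lyapV {D : ℕ} {lam φ c₁ c₂ : ℝ} {Φ : (Fin D → ℝ) → ℝ}
    {gradPhi : (Fin D → ℝ) → (Fin D → ℝ)} {q : Fin D → ℝ} (hΦ : DifferentiableAt ℝ Φ q)
    (hgrad : ∀ v, fderiv ℝ Φ q v = ∑ i, gradPhi q i * v i)
    (hc₁ : c₁ = (1 / (4 * lam)) * sin φ ^ 2) (hc₂ : c₂ = lam⁻¹ * c₁ * (1 - cos φ))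
    (p : Fin D → ℝ) :
    rhmcGen D lam φ gradPhi (lyapV D Φ c₁ c₂) (q, p)
      = -c₁ * (∑ i, p i ^ 2 + ∑ i, gradPhi q i * q i) + D / (2 * lam) * sin φ ^ 2 := by
  have hrefresh := integral_lyapV_add_smul Φ c₁ c₂ q (fun i => cos φ * p i) (sin φ)
  rw [rhmcGen, hrefresh, fderiv_lyapV c₁ c₂ hΦ, hgrad]
  simp only [lyapV]
  have hkinetic : ∑ i, (cos φ * p i) ^ 2 = cos φ ^ 2 * ∑ i, p i ^ 2 := by
    simp only [mul_pow, Finset.mul_sum]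
  have hcross : ∑ i, q i * (cos φ * p i) = cos φ * ∑ i, q i * p i := by
    simp only [Finset.mul_sum, mul_left_comm]
  have hforce_p : ∑ i, p i * -gradPhi q i = -∑ i, gradPhi q i * p i := by
    simp only [mul_neg, Finset.sum_neg_distrib, mul_comm]
  have hforce_q : ∑ i, (q i * -gradPhi q i + p i * p i) = ∑ i, p i ^ 2 - ∑ i, gradPhi q i * q i := by
    rw [← Finset.sum_sub_distrib]
    exact Finset.sum_congr rfl fun i _ => by ring
  rw [hkinetic, hcross, hforce_p, hforce_q, hc₂, hc₁]
  linear_combination (lam⁻¹ * (∑ i, p i ^ 2) / 2) * sin_sq_add_cos_sq φ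

lemma two_mul_sum_mul_le {ι : Type*} (s : Finset ι) (x y : ι → ℝ) (t : ℝ) {ε : ℝ} (hε : 0 < ε) :
    2 * t * ∑ i ∈ s, x i * y i ≤ ε * ∑ i ∈ s, y i ^ 2 + t ^ 2 / ε * ∑ i ∈ s, x i ^ 2 := by
  simp only [Finset.mul_sum, ← Finset.sum_add_distrib]
  refine Finset.sum_le_sum fun i _ => ?_
  have hsq : 0 ≤ (ε * y i - t * x i) ^ 2 / ε := by positivity
  have hexpand : (ε * y i - t * x i) ^ 2 / ε
      = ε * y i ^ 2 + t ^ 2 / ε * x i ^ 2 - 2 * t * (x i * y i) := by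
    field_simp
    ring
  linarith

lemma two_mul_lyapV_le {D : ℕ} {Φ : (Fin D → ℝ) → ℝ} {c₁ c₂ a b : ℝ} (hb1 : b < 1)
    (q p g : Fin D → ℝ)
    (hdrift : (1 / 2) * ∑ i, g i * q i
        ≥ b * Φ q + ((c₁ * b) ^ 2 + c₂ * b * (1 - b)) / (2 * (1 - b)) * (∑ i, (q i) ^ 2) - a) :
    2 * b * lyapV D Φ c₁ c₂ (q, p) ≤ ∑ i, p i ^ 2 + ∑ i, g i * q i + 2 * a := by
  have h1b : 0 < 1 - b := sub_pos.2 hb1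
  have hyoung := two_mul_sum_mul_le Finset.univ q p (c₁ * b) h1b
  have hμ : ((c₁ * b) ^ 2 + c₂ * b * (1 - b)) / (2 * (1 - b))
      = ((c₁ * b) ^ 2 / (1 - b) + c₂ * b) / 2 := by
    field_simp
  rw [hμ] at hdrift
  simp only [lyapV]
  linarith

theorem rhmc_foster_lyapunov_general (D : ℕ) (lam φ : ℝ) (hlam : 0 < lam)
    (hφ0 : 0 < φ) (hφ : φ ≤ π / 2)
    (Φ : (Fin D → ℝ) → ℝ) (gradPhi : (Fin D → ℝ) → (Fin D → ℝ))
    (hΦ : Differentiable ℝ Φ)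
    (hgrad : ∀ q v, fderiv ℝ Φ q v = ∑ i, gradPhi q i * v i)
    (c₁ c₂ : ℝ) (hc₁ : c₁ = (1 / (4 * lam)) * Real.sin φ ^ 2)
    (hc₂ : c₂ = lam⁻¹ * c₁ * (1 - Real.cos φ))
    (a b : ℝ) (ha : 0 < a) (hb0 : 0 < b) (hb1 : b < 1)
    (hdrift : ∀ q : Fin D → ℝ,
      (1 / 2) * ∑ i, gradPhi q i * q i
        ≥ b * Φ q + ((c₁ * b) ^ 2 + c₂ * b * (1 - b)) / (2 * (1 - b)) * (∑ i, (q i) ^ 2) - a) :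
    0 < 2 * c₁ * b ∧ 0 < 2 * c₁ * a + (D / (2 * lam)) * Real.sin φ ^ 2 ∧
    ∀ z : (Fin D → ℝ) × (Fin D → ℝ),
      rhmcGen D lam φ gradPhi (lyapV D Φ c₁ c₂) z
        ≤ -(2 * c₁ * b) * lyapV D Φ c₁ c₂ z
            + (2 * c₁ * a + (D / (2 * lam)) * Real.sin φ ^ 2) := by
  have hsin : 0 < sin φ := sin_pos_of_pos_of_lt_pi hφ0 (by linarith [pi_pos])
  have hc₁pos : 0 < c₁ := by rw [hc₁]; positivity
  refine ⟨by positivity, by positivity, ?_⟩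
  rintro ⟨q, p⟩
  rw [rhmcGen_lyapV (hΦ q) (hgrad q) hc₁ hc₂]
  linarith [mul_le_mul_of_nonneg_left (two_mul_lyapV_le hb1 q p _ (hdrift q)) hc₁pos.le]

/-- Foster–Lyapunov drift condition for RHMC: `L V ≤ −γ V + K` with
`γ = 2 c₁ b > 0` and `K = 2 c₁ a + (D/(2λ)) sin²φ > 0`. -/
theorem rhmc_foster_lyapunov (D : ℕ) (lam φ : ℝ) (hlam : 0 < lam)
    (hφ0 : 0 < φ) (hφ : φ ≤ π / 2)
    (Φ : (Fin D → ℝ) → ℝ) (gradPhi : (Fin D → ℝ) → (Fin D → ℝ))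
    (hΦ : Differentiable ℝ Φ)
    (hgrad : ∀ q v, fderiv ℝ Φ q v = ∑ i, gradPhi q i * v i)
    (hΦ0 : ∀ q, 0 ≤ Φ q)
    (c₁ c₂ : ℝ) (hc₁ : c₁ = (1 / (4 * lam)) * Real.sin φ ^ 2)
    (hc₂ : c₂ = lam⁻¹ * c₁ * (1 - Real.cos φ))
    (a b : ℝ) (ha : 0 < a) (hb0 : 0 < b) (hb1 : b < 1)
    (hdrift : ∀ q : Fin D → ℝ,
      (1 / 2) * ∑ i, gradPhi q i * q i
        ≥ b * Φ q + ((c₁ * b) ^ 2 + c₂ * b * (1 - b)) / (2 * (1 - b)) * (∑ i, (q i) ^ 2) - a) :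
    0 < 2 * c₁ * b ∧ 0 < 2 * c₁ * a + (D / (2 * lam)) * Real.sin φ ^ 2 ∧
    ∀ z : (Fin D → ℝ) × (Fin D → ℝ),
      rhmcGen D lam φ gradPhi (lyapV D Φ c₁ c₂) z
        ≤ -(2 * c₁ * b) * lyapV D Φ c₁ c₂ z
            + (2 * c₁ * a + (D / (2 * lam)) * Real.sin φ ^ 2) :=
  rhmc_foster_lyapunov_general D lam φ hlam hφ0 hφ Φ gradPhi hΦ hgrad c₁ c₂ hc₁ hc₂ a b ha hb0 hb1
    hdrift
end

section
/- If δt ~ Exp(1/λ) with λ > 0 and σ > 0, then E[2 − 2cos(δt/σ)]·σ² = 2λ²σ²/(σ² + λ²). Consequently, for a D-dimensional Gaussian target with variances σ₁², …, σ_D², the single-step equilibrium mean squared displacement of exact RHMC is MSD = Σ_{i=1}^D 2λ²σᵢ²/(σᵢ² + λ²). -/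
/-!
Given `δt = t`, the displacement of coordinate `i` is `(cos θ - 1) qᵢ + σᵢ sin θ ξᵢ` with
`θ = t / σᵢ`; under `qᵢ ~ N(0, σᵢ²)`, `ξᵢ ~ N(0, 1)` its second moment is
`(cos θ - 1)² σᵢ² + σᵢ² sin² θ = (2 - 2 cos θ) σᵢ²`. Averaging over `δt` reduces to the Laplace
transform `∫₀^∞ cos (b t) e^{-a t} dt = a / (a² + b²)`, the real part of
`∫₀^∞ e^{(-a + i b) t} dt = 1 / (a - i b)`.
-/

open MeasureTheory ProbabilityTheory Real Set
open scoped NNReal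

lemma cos_mul_mul_exp_neg_mul_eq_re_cexp (a b t : ℝ) :
    cos (b * t) * exp (-a * t) = (Complex.exp ((-a + b * Complex.I) * t)).re := by
  rw [Complex.exp_re]
  simp only [Complex.add_re, Complex.neg_re, Complex.ofReal_re, Complex.mul_re,
    Complex.I_re, Complex.I_im, Complex.add_im, Complex.neg_im, Complex.ofReal_im,
    Complex.mul_im]
  ring_nf

lemma integrableOn_cos_mul_mul_exp_neg_mul_Ioi {a : ℝ} (ha : 0 < a) (b : ℝ) :
    IntegrableOn (fun t => cos (b * t) * exp (-a * t)) (Ioi 0) := by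
  simp_rw [cos_mul_mul_exp_neg_mul_eq_re_cexp]
  exact (integrableOn_exp_mul_complex_Ioi (by simpa using ha) 0).re

lemma integral_cos_mul_mul_exp_neg_mul_Ioi {a : ℝ} (ha : 0 < a) (b : ℝ) :
    ∫ t in Ioi 0, cos (b * t) * exp (-a * t) = a / (a ^ 2 + b ^ 2) := by
  have hre : (-a + b * Complex.I).re < 0 := by simpa using ha
  simp_rw [cos_mul_mul_exp_neg_mul_eq_re_cexp]
  rw [← RCLike.re_eq_complex_re, integral_re (integrableOn_exp_mul_complex_Ioi hre 0),
    integral_exp_mul_complex_Ioi hre 0]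
  simp [Complex.normSq_apply, ← sq, neg_div]

lemma integral_sq_gaussianReal (μ : ℝ) (v : ℝ≥0) :
    ∫ x, x ^ 2 ∂gaussianReal μ v = μ ^ 2 + v := by
  have hvar := variance_eq_sub (memLp_id_gaussianReal (μ := μ) (v := v) 2)
  rw [variance_id_gaussianReal] at hvar
  simp only [Pi.pow_apply, id_eq, integral_id_gaussianReal] at hvar
  linarith

lemma gaussianReal_map_const_add_mul (μ : ℝ) (v : ℝ≥0) (a b : ℝ) :
    (gaussianReal μ v).map (fun x => a + b * x)
      = gaussianReal (a + b * μ) (.mk (b ^ 2) (sq_nonneg b) * v) := by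
  have hcomp : (fun x => a + b * x) = (a + ·) ∘ (b * ·) := rfl
  rw [hcomp, ← Measure.map_map (by fun_prop) (by fun_prop), gaussianReal_map_const_mul,
    gaussianReal_map_const_add, add_comm]

lemma integral_const_add_mul_sq_gaussianReal (μ : ℝ) (v : ℝ≥0) (a b : ℝ) :
    ∫ x, (a + b * x) ^ 2 ∂gaussianReal μ v = (a + b * μ) ^ 2 + b ^ 2 * v := by
  rw [← integral_map (f := fun y => y ^ 2) (by fun_prop) (by fun_prop),
    gaussianReal_map_const_add_mul, integral_sq_gaussianReal, NNReal.coe_mul, NNReal.coe_mk]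

lemma integral_integral_sq_mul_add_mul_sub_gaussianReal (v : ℝ≥0) (c d : ℝ) :
    ∫ q, ∫ ξ, (c * q + d * ξ - q) ^ 2 ∂gaussianReal 0 1 ∂gaussianReal 0 v
      = (c - 1) ^ 2 * v + d ^ 2 := by
  have hinner (q : ℝ) :
      ∫ ξ, (c * q + d * ξ - q) ^ 2 ∂gaussianReal 0 1 = ((c - 1) * q) ^ 2 + d ^ 2 := by
    have h := integral_const_add_mul_sq_gaussianReal 0 1 ((c - 1) * q) d
    simp only [mul_zero, add_zero, NNReal.coe_one, mul_one] at h
    rw [← h]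
    congr with ξ
    ring
  have hsq : Integrable (fun q => ((c - 1) * q) ^ 2) (gaussianReal 0 v) := by
    simpa [mul_pow] using ((memLp_id_gaussianReal 2).integrable_sq).const_mul ((c - 1) ^ 2)
  simp_rw [hinner]
  rw [integral_add hsq (integrable_const _)]
  simp [mul_pow, integral_const_mul, integral_sq_gaussianReal]

lemma integral_integral_rhmc_step_sq_gaussianReal (s θ : ℝ) :
    ∫ q, ∫ ξ, (cos θ * q + s * sin θ * ξ - q) ^ 2 ∂gaussianReal 0 1
        ∂gaussianReal 0 (s ^ 2).toNNReal
      = (2 - 2 * cos θ) * s ^ 2 := by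
  rw [integral_integral_sq_mul_add_mul_sub_gaussianReal, Real.coe_toNNReal _ (sq_nonneg s)]
  linear_combination s ^ 2 * sin_sq_add_cos_sq θ

lemma integral_two_sub_two_cos_div_mul_exponential_density_Ioi {lam s : ℝ} (hlam : 0 < lam)
    (hs : s ≠ 0) :
    ∫ t in Ioi 0, (2 - 2 * cos (t / s)) * (lam⁻¹ * exp (-t / lam))
      = 2 * lam ^ 2 / (s ^ 2 + lam ^ 2) := by
  have hrate : 0 < lam⁻¹ := inv_pos.2 hlam
  have hsplit (t : ℝ) : (2 - 2 * cos (t / s)) * (lam⁻¹ * exp (-t / lam))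
      = 2 * lam⁻¹ * (cos (0 * t) * exp (-lam⁻¹ * t))
        - 2 * lam⁻¹ * (cos (s⁻¹ * t) * exp (-lam⁻¹ * t)) := by
    rw [zero_mul, cos_zero, neg_div, div_eq_inv_mul, div_eq_inv_mul, neg_mul]
    ring
  simp_rw [hsplit]
  rw [integral_sub ((integrableOn_cos_mul_mul_exp_neg_mul_Ioi hrate 0).const_mul _)
      ((integrableOn_cos_mul_mul_exp_neg_mul_Ioi hrate s⁻¹).const_mul _),
    integral_const_mul, integral_const_mul, integral_cos_mul_mul_exp_neg_mul_Ioi hrate,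
    integral_cos_mul_mul_exp_neg_mul_Ioi hrate]
  field_simp
  ring

/-- `E[2 − 2cos(δt/σ)]·σ² = 2λ²σ²/(σ² + λ²)` for `δt ~ Exp(1/λ)`, and consequently the
single-step equilibrium mean squared displacement of exact RHMC for a `D`-dimensional Gaussian
target with variances `σᵢ²` is `MSD = Σᵢ 2λ²σᵢ²/(σᵢ² + λ²)`. At equilibrium `qᵢ ~ N(0, σᵢ²)`
and one step maps `qᵢ ↦ cos(δt/σᵢ) qᵢ + σᵢ sin(δt/σᵢ) ξᵢ` with `ξᵢ ~ N(0,1)`. -/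
theorem rhmc_msd (D : ℕ) (lam : ℝ) (hlam : 0 < lam) (σ : Fin D → ℝ) (hσ : ∀ i, 0 < σ i) :
    (∀ s : ℝ, 0 < s →
      (∫ t in Set.Ioi (0 : ℝ),
          (2 - 2 * Real.cos (t / s)) * (lam⁻¹ * Real.exp (-t / lam))) * s ^ 2
        = 2 * lam ^ 2 * s ^ 2 / (s ^ 2 + lam ^ 2)) ∧
    (∑ i,
        ∫ t in Set.Ioi (0 : ℝ),
          (∫ q : ℝ,
              (∫ ξ : ℝ,
                  (Real.cos (t / σ i) * q + σ i * Real.sin (t / σ i) * ξ - q) ^ 2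
                ∂gaussianReal 0 1)
            ∂gaussianReal 0 (Real.toNNReal (σ i ^ 2)))
            * (lam⁻¹ * Real.exp (-t / lam)))
      = ∑ i, 2 * lam ^ 2 * σ i ^ 2 / (σ i ^ 2 + lam ^ 2) := by
  have hstep (s : ℝ) (hs : 0 < s) :
      (∫ t in Ioi 0, (2 - 2 * cos (t / s)) * (lam⁻¹ * exp (-t / lam))) * s ^ 2
        = 2 * lam ^ 2 * s ^ 2 / (s ^ 2 + lam ^ 2) := by
    rw [integral_two_sub_two_cos_div_mul_exponential_density_Ioi hlam hs.ne', div_mul_eq_mul_div]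
  refine ⟨hstep, Finset.sum_congr rfl fun i _ => ?_⟩
  simp_rw [integral_integral_rhmc_step_sq_gaussianReal, mul_right_comm _ (σ i ^ 2)]
  rw [integral_mul_const, hstep _ (hσ i)]
end

section
/- Let q₀ ~ N(0, σ²), let (δt_k) be i.i.d. Exp(1/λ) random variables and (ξ_k) i.i.d. N(0,1), all independent, and define recursively q_{n+1} = cos(δt_n/σ)·q_n + σ·sin(δt_n/σ)·ξ_n. Then for every j ≥ 0, Cov(q₀, q_j) = σ²·(σ²/(σ² + λ²))^j. -/
open MeasureTheory ProbabilityTheory Real Set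
open scoped NNReal

/-!
Unrolling the recursion, `q_j = (∏ i, cos (δt_i / σ)) q₀ + N_j` where the noise `N_j` is the chain
started at `0`, a function of `(δt, ξ)` alone. Since `q₀` is centred with variance `σ²` and
independent of `(δt, ξ)`, `Cov(q₀, q_j) = σ² E[∏ i, cos (δt_i / σ)] = σ² (E cos (δt / σ))^j`, and
`E cos (δt / σ)` is the real part of the characteristic function `λ⁻¹ / (λ⁻¹ - i / σ)` of the
exponential law, namely `σ² / (σ² + λ²)`.
-/

/-- The RHMC chain for the univariate Gaussian target of standard deviation `σ`:
`q_{n+1} = cos(δt_n/σ) q_n + σ sin(δt_n/σ) ξ_n`, as a function of the durations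
`t : Fin j → ℝ`, the Gaussian innovations `ξ : Fin j → ℝ`, and the initial state `q₀`. -/
noncomputable def rhmcChain (σ : ℝ) : (j : ℕ) → (Fin j → ℝ) → (Fin j → ℝ) → ℝ → ℝ
  | 0, _, _, q0 => q0
  | n + 1, t, ξ, q0 =>
      Real.cos (t (Fin.last n) / σ) *
          rhmcChain σ n (fun i => t i.castSucc) (fun i => ξ i.castSucc) q0
        + σ * Real.sin (t (Fin.last n) / σ) * ξ (Fin.last n)

lemma integral_expMeasure_eq_integral_Ioi {E : Type*} [NormedAddCommGroup E] [NormedSpace ℝ E]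
    {r : ℝ} (hr : 0 < r) (g : ℝ → E) :
    ∫ x, g x ∂expMeasure r = ∫ x in Ioi 0, (r * Real.exp (-(r * x))) • g x := by
  rw [expMeasure, gammaMeasure, integral_withDensity_eq_integral_toReal_smul (f := gammaPDF 1 r)
    (measurable_gammaPDFReal 1 r).ennreal_ofReal (ae_of_all _ fun _ => ENNReal.ofReal_lt_top),
    ← integral_Ici_eq_integral_Ioi, ← integral_indicator measurableSet_Ici]
  congr 1 with x
  by_cases hx : 0 ≤ x
  · simp [gammaPDF, gammaPDFReal, hx, hr.le, (Real.exp_pos _).le]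
  · simp [gammaPDF, gammaPDFReal, hx]

open Complex in
lemma charFun_expMeasure {r : ℝ} (hr : 0 < r) (t : ℝ) :
    charFun (expMeasure r) t = r / (r - t * I) := by
  have hre : (-(r : ℂ) + t * I).re < 0 := by simpa using hr
  calc charFun (expMeasure r) t
      = ∫ x : ℝ in Ioi 0, (r : ℂ) * Complex.exp ((-(r : ℂ) + t * I) * x) := by
        rw [charFun_apply_real, integral_expMeasure_eq_integral_Ioi hr]
        refine setIntegral_congr_fun measurableSet_Ioi fun x _ => ?_
        rw [Complex.real_smul]
        push_cast
        rw [mul_assoc, ← Complex.exp_add]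
        ring_nf
    _ = r / (r - t * I) := by
        rw [integral_const_mul, integral_exp_mul_complex_Ioi hre, Complex.ofReal_zero, mul_zero,
          Complex.exp_zero, show -(r : ℂ) + t * I = -(r - t * I) by ring, div_neg, neg_div,
          neg_neg, mul_one_div]

open Complex in
lemma integral_cos_mul_expMeasure {r : ℝ} (hr : 0 < r) (b : ℝ) :
    ∫ x, Real.cos (b * x) ∂expMeasure r = r ^ 2 / (r ^ 2 + b ^ 2) := by
  have : IsProbabilityMeasure (expMeasure r) := isProbabilityMeasure_expMeasure hr
  have hint : Integrable (fun x : ℝ => Complex.exp ((b * x : ℝ) * I)) (expMeasure r) :=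
    (integrable_const (1 : ℝ)).mono' (by fun_prop) (ae_of_all _ fun x => by
      rw [Complex.norm_exp_ofReal_mul_I])
  calc ∫ x, Real.cos (b * x) ∂expMeasure r
      = (charFun (expMeasure r) b).re := by
        simp_rw [charFun_apply_real, ← Complex.ofReal_mul, ← RCLike.re_to_complex,
          ← integral_re hint, RCLike.re_to_complex, Complex.exp_ofReal_mul_I_re]
    _ = r ^ 2 / (r ^ 2 + b ^ 2) := by
        rw [charFun_expMeasure hr, Complex.div_re]
        simp [Complex.normSq_apply]
        ring

lemma integral_cos_div_expMeasure_inv {σ lam : ℝ} (hσ : σ ≠ 0) (hlam : 0 < lam) :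
    ∫ x, Real.cos (x / σ) ∂expMeasure lam⁻¹ = σ ^ 2 / (σ ^ 2 + lam ^ 2) := by
  simp_rw [div_eq_inv_mul]
  rw [integral_cos_mul_expMeasure (inv_pos.mpr hlam)]
  field_simp

lemma rhmcChain_eq_prod_cos_mul_add (σ : ℝ) {j : ℕ} (t ξ : Fin j → ℝ) (q0 : ℝ) :
    rhmcChain σ j t ξ q0 = (∏ i, Real.cos (t i / σ)) * q0 + rhmcChain σ j t ξ 0 := by
  induction j with
  | zero => simp [rhmcChain]
  | succ n ih =>
      rw [rhmcChain, rhmcChain, ih, Fin.prod_univ_castSucc]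
      ring

lemma continuous_rhmcChain_zero (σ : ℝ) (j : ℕ) :
    Continuous fun w : (Fin j → ℝ) × (Fin j → ℝ) => rhmcChain σ j w.1 w.2 0 := by
  induction j with
  | zero => exact continuous_const
  | succ n ih =>
      simp only [rhmcChain]
      have := ih.comp (f := fun w : (Fin (n + 1) → ℝ) × (Fin (n + 1) → ℝ) =>
        ((fun i => w.1 i.castSucc, fun i => w.2 i.castSucc))) (by fun_prop)
      exact (by fun_prop : Continuous _).mul this |>.add (by fun_prop)

lemma abs_rhmcChain_zero_le (σ : ℝ) {j : ℕ} (t ξ : Fin j → ℝ) :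
    |rhmcChain σ j t ξ 0| ≤ |σ| * ∑ i, |ξ i| := by
  induction j with
  | zero => simp [rhmcChain]
  | succ n ih =>
      rw [rhmcChain, Fin.sum_univ_castSucc, mul_add]
      refine (abs_add_le _ _).trans (add_le_add ?_ ?_)
      · rw [abs_mul]
        exact (mul_le_of_le_one_left (abs_nonneg _) (abs_cos_le_one _)).trans (ih _ _)
      · rw [abs_mul, abs_mul, mul_assoc]
        gcongr
        exact mul_le_of_le_one_left (abs_nonneg _) (abs_sin_le_one _)

lemma integrable_rhmcChain_zero (σ : ℝ) {j : ℕ} {ρ η : Measure (Fin j → ℝ)}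
    [IsFiniteMeasure ρ] [IsFiniteMeasure η] (hη : ∀ i, Integrable (fun ξ => ξ i) η) :
    Integrable (fun w : (Fin j → ℝ) × (Fin j → ℝ) => rhmcChain σ j w.1 w.2 0) (ρ.prod η) := by
  have hbound : Integrable (fun ξ : Fin j → ℝ => |σ| * ∑ i, |ξ i|) η :=
    (integrable_finsetSum _ fun i _ => (hη i).abs).const_mul _
  refine (hbound.comp_snd ρ).mono' (continuous_rhmcChain_zero σ j).aestronglyMeasurable
    (ae_of_all _ fun w => ?_)
  exact abs_rhmcChain_zero_le σ w.1 w.2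

lemma integral_fst_mul_affine_gaussianReal {β : Type*} [MeasurableSpace β] {ν : Measure β}
    [SFinite ν] (v : ℝ≥0) {C N : β → ℝ} (hC : Integrable C ν) (hN : Integrable N ν) :
    ∫ z : ℝ × β, z.1 * (C z.2 * z.1 + N z.2) ∂(gaussianReal 0 v).prod ν
      = v * ∫ y, C y ∂ν := by
  have hsq : ∫ x, x ^ 2 ∂gaussianReal 0 v = v := by
    simpa [variance_id_gaussianReal] using
      (variance_of_integral_eq_zero aemeasurable_id integral_id_gaussianReal).symm
  have hsq_int : Integrable (fun x : ℝ => x ^ 2) (gaussianReal 0 v) :=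
    (memLp_id_gaussianReal 2).integrable_sq
  have hid_int : Integrable (fun x : ℝ => x) (gaussianReal 0 v) :=
    (memLp_id_gaussianReal 1).integrable le_rfl
  calc ∫ z : ℝ × β, z.1 * (C z.2 * z.1 + N z.2) ∂(gaussianReal 0 v).prod ν
      = ∫ z : ℝ × β, z.1 ^ 2 * C z.2 + z.1 * N z.2 ∂(gaussianReal 0 v).prod ν := by
        congr 1 with z; ring
    _ = v * ∫ y, C y ∂ν := by
        rw [integral_add (hsq_int.mul_prod hC) (hid_int.mul_prod hN),
          integral_prod_mul (fun x => x ^ 2), integral_prod_mul (fun x => x), hsq,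
          integral_id_gaussianReal, zero_mul, add_zero]

/-- For the stationary univariate RHMC chain with `q₀ ~ N(0,σ²)`, `δt_k` i.i.d. exponential with
mean `λ` (rate `λ⁻¹`), and `ξ_k` i.i.d. `N(0,1)`, all independent,
`Cov(q₀, q_j) = σ² (σ²/(σ² + λ²))^j`. -/
theorem rhmc_autocovariance (σ lam : ℝ) (hσ : 0 < σ) (hlam : 0 < lam) (j : ℕ) :
    (∫ z : ℝ × ((Fin j → ℝ) × (Fin j → ℝ)),
        z.1 * rhmcChain σ j z.2.1 z.2.2 z.1
        ∂((gaussianReal 0 (Real.toNNReal (σ ^ 2))).prod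
            ((Measure.pi fun _ : Fin j => ProbabilityTheory.expMeasure lam⁻¹).prod
              (Measure.pi fun _ : Fin j => gaussianReal 0 1))))
      - (∫ z : ℝ × ((Fin j → ℝ) × (Fin j → ℝ)), z.1
          ∂((gaussianReal 0 (Real.toNNReal (σ ^ 2))).prod
              ((Measure.pi fun _ : Fin j => ProbabilityTheory.expMeasure lam⁻¹).prod
                (Measure.pi fun _ : Fin j => gaussianReal 0 1))))
        * (∫ z : ℝ × ((Fin j → ℝ) × (Fin j → ℝ)),
            rhmcChain σ j z.2.1 z.2.2 z.1
            ∂((gaussianReal 0 (Real.toNNReal (σ ^ 2))).prod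
                ((Measure.pi fun _ : Fin j => ProbabilityTheory.expMeasure lam⁻¹).prod
                  (Measure.pi fun _ : Fin j => gaussianReal 0 1))))
      = σ ^ 2 * (σ ^ 2 / (σ ^ 2 + lam ^ 2)) ^ j := by
  have : IsProbabilityMeasure (expMeasure lam⁻¹) :=
    isProbabilityMeasure_expMeasure (inv_pos.mpr hlam)
  have hC : Integrable (fun w : (Fin j → ℝ) × (Fin j → ℝ) => ∏ i, Real.cos (w.1 i / σ))
      ((Measure.pi fun _ => expMeasure lam⁻¹).prod (Measure.pi fun _ => gaussianReal 0 1)) :=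
    .of_bound (by fun_prop) 1 (ae_of_all _ fun w => by
      rw [Real.norm_eq_abs, Finset.abs_prod]
      exact Finset.prod_le_one (fun _ _ => abs_nonneg _) fun _ _ => abs_cos_le_one _)
  have hN := integrable_rhmcChain_zero σ (ρ := Measure.pi fun _ : Fin j => expMeasure lam⁻¹)
    fun _ => integrable_eval (μ := fun _ => gaussianReal 0 1)
      ((memLp_id_gaussianReal 1).integrable le_rfl)
  have hchain : (fun z : ℝ × ((Fin j → ℝ) × (Fin j → ℝ)) => z.1 * rhmcChain σ j z.2.1 z.2.2 z.1)
      = fun z => z.1 * ((∏ i, Real.cos (z.2.1 i / σ)) * z.1 + rhmcChain σ j z.2.1 z.2.2 0) := by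
    funext z; rw [rhmcChain_eq_prod_cos_mul_add]
  rw [hchain, integral_fst_mul_affine_gaussianReal _ hC hN, integral_fun_fst (fun x : ℝ => x),
    integral_id_gaussianReal, smul_zero, zero_mul, sub_zero,
    integral_fun_fst fun t : Fin j → ℝ => ∏ i, Real.cos (t i / σ),
    integral_fintype_prod_eq_pow (fun x => Real.cos (x / σ)), Fintype.card_fin,
    integral_cos_div_expMeasure_inv hσ.ne' hlam, probReal_univ, one_smul,
    Real.coe_toNNReal _ (by positivity)]
end
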